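/- The number of cubes of side length ε/d in the rectangular grid of ℝ^d (spaced at width ε/d in each coordinate) that intersect the ℓ¹-ball S_δ = {u ∈ ℝ^d : ‖u‖₁ ≤ δ} is at most (2d(δ+ε)/ε)^d / d!, which is bounded above by (2e(δ+ε)/ε)^d. -/

import Mathlib

/-!
Encode a cube index `z j ∈ ℤ` by its sign and its distance `m j ∈ ℕ`, in cells, from the origin:
every point of the cube `∏ [z j h, (z j + 1) h]` has `ℓ¹`-norm at least `h ∑ m j`, so a cube meeting
the ball of radius `δ` has `∑ m j ≤ N := ⌊δ / h⌋`. By stars and bars there are at most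
`(N + d).choose d ≤ (N + d) ^ d / d!` such `m`, and `2 ^ d` sign patterns; with `h = ε / d` this is
`(2 d (δ + ε) / ε) ^ d / d!`. Finally `d ^ d / d! ≤ e ^ d` is one term of the series of `e ^ d`.
-/

open Finset

/-- `n ↦ (false, n)` and `-(n + 1) ↦ (true, n)`. -/
def intEquivBoolProdNat : ℤ ≃ Bool × ℕ :=
  Equiv.intEquivNatSumNat.trans (Equiv.boolProdEquivSum ℕ).symm

lemma intEquivBoolProdNat_snd_mul_le_abs {z : ℤ} {h u : ℝ}
    (hu : (z : ℝ) * h ≤ u ∧ u ≤ ((z : ℝ) + 1) * h) :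
    ((intEquivBoolProdNat z).2 : ℝ) * h ≤ |u| := by
  cases z with
  | ofNat n => exact hu.1.trans (le_abs_self u)
  | negSucc n =>
    have hu' : u ≤ -(n * h) := by simpa [Int.cast_negSucc] using hu.2
    show (n : ℝ) * h ≤ |u|
    linarith [neg_le_abs u]

section StarsAndBars

variable (ι : Type*) [Fintype ι] (N : ℕ)

def padSlack (m : {m : ι → ℕ // ∑ i, m i ≤ N}) : {P : Option ι → ℕ // ∑ o, P o = N} :=
  ⟨fun o => o.elim (N - ∑ i, m.1 i) m.1, by simp [Fintype.sum_option, m.2]⟩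

lemma padSlack_injective : Function.Injective (padSlack ι N) := fun _ _ h =>
  Subtype.ext (funext fun i => congrFun (congrArg Subtype.val h) (some i))

instance : Finite {P : Option ι → ℕ // ∑ o, P o = N} := by
  classical exact Finite.of_equiv _ (Sym.equivNatSumOfFintype (Option ι) N)

instance : Finite {m : ι → ℕ // ∑ i, m i ≤ N} :=
  Finite.of_injective _ (padSlack_injective ι N)

lemma card_sum_le_le_choose :
    Nat.card {m : ι → ℕ // ∑ i, m i ≤ N} ≤ (N + Fintype.card ι).choose (Fintype.card ι) := by
  classical
  calc Nat.card {m : ι → ℕ // ∑ i, m i ≤ N}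
      ≤ Nat.card {P : Option ι → ℕ // ∑ o, P o = N} :=
        Nat.card_le_card_of_injective _ (padSlack_injective ι N)
    _ = Nat.card (Sym (Option ι) N) := Nat.card_congr (Sym.equivNatSumOfFintype _ _).symm
    _ = (N + Fintype.card ι).choose (Fintype.card ι) := by
      rw [Nat.card_eq_fintype_card, Sym.card_sym_eq_choose, Fintype.card_option,
        show Fintype.card ι + 1 + N - 1 = N + Fintype.card ι by omega, Nat.choose_symm_add]

end StarsAndBars

def l1BallGridCubes (ι : Type*) [Fintype ι] (h δ : ℝ) : Set (ι → ℤ) :=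
  {z | ∃ u : ι → ℝ, (∀ j, (z j : ℝ) * h ≤ u j ∧ u j ≤ ((z j : ℝ) + 1) * h) ∧ ∑ j, |u j| ≤ δ}

section GridCubes

variable {ι : Type*} [Fintype ι] {h δ : ℝ}

lemma sum_snd_intEquivBoolProdNat_le_floor (hh : 0 < h) {z : ι → ℤ}
    (hz : z ∈ l1BallGridCubes ι h δ) :
    ∑ j, (intEquivBoolProdNat (z j)).2 ≤ ⌊δ / h⌋₊ := by
  obtain ⟨u, hu, hsum⟩ := hz
  apply Nat.le_floor
  rw [le_div_iff₀ hh, Nat.cast_sum, sum_mul]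
  exact (sum_le_sum fun j _ => intEquivBoolProdNat_snd_mul_le_abs (hu j)).trans hsum

lemma card_l1BallGridCubes_le (hh : 0 < h) :
    Nat.card (l1BallGridCubes ι h δ) ≤
      2 ^ Fintype.card ι * (⌊δ / h⌋₊ + Fintype.card ι).choose (Fintype.card ι) := by
  let code : l1BallGridCubes ι h δ → (ι → Bool) × {m : ι → ℕ // ∑ i, m i ≤ ⌊δ / h⌋₊} :=
    fun z => (fun j => (intEquivBoolProdNat (z.1 j)).1,
      ⟨fun j => (intEquivBoolProdNat (z.1 j)).2, sum_snd_intEquivBoolProdNat_le_floor hh z.2⟩)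
  have hcode : Function.Injective code := by
    intro z z' hzz'
    simp only [code, Prod.mk.injEq, Subtype.mk.injEq, funext_iff] at hzz'
    exact Subtype.ext (funext fun j => intEquivBoolProdNat.injective
      (Prod.ext (hzz'.1 j) (hzz'.2 j)))
  calc Nat.card (l1BallGridCubes ι h δ)
      ≤ Nat.card ((ι → Bool) × {m : ι → ℕ // ∑ i, m i ≤ ⌊δ / h⌋₊}) :=
        Nat.card_le_card_of_injective code hcode
    _ = 2 ^ Fintype.card ι * Nat.card {m : ι → ℕ // ∑ i, m i ≤ ⌊δ / h⌋₊} := by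
      rw [Nat.card_prod, Nat.card_fun, Nat.card_eq_fintype_card (α := Bool), Fintype.card_bool,
        Nat.card_eq_fintype_card (α := ι)]
    _ ≤ _ := Nat.mul_le_mul_left _ (card_sum_le_le_choose ι _)

lemma card_l1BallGridCubes_le_pow_div_factorial (hh : 0 < h) (hδ : 0 ≤ δ) :
    (Nat.card (l1BallGridCubes ι h δ) : ℝ) ≤
      (2 * (δ / h + Fintype.card ι)) ^ Fintype.card ι / (Fintype.card ι).factorial := by
  set d := Fintype.card ι
  set N := ⌊δ / h⌋₊
  have hN : (N : ℝ) ≤ δ / h := Nat.floor_le (div_nonneg hδ hh.le)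
  calc (Nat.card (l1BallGridCubes ι h δ) : ℝ)
      ≤ 2 ^ d * ((N + d).choose d : ℝ) := by exact_mod_cast card_l1BallGridCubes_le hh
    _ ≤ 2 ^ d * (((N + d : ℕ) : ℝ) ^ d / d.factorial) := by
      gcongr
      exact Nat.choose_le_pow_div d (N + d)
    _ = (2 * ((N : ℝ) + d)) ^ d / d.factorial := by push_cast; rw [mul_pow, mul_div_assoc]
    _ ≤ (2 * (δ / h + d)) ^ d / d.factorial := by gcongr

end GridCubes

lemma mul_natCast_pow_div_factorial_le {a : ℝ} (ha : 0 ≤ a) (n : ℕ) :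
    (a * n) ^ n / n.factorial ≤ (a * Real.exp 1) ^ n := by
  have hn : (n : ℝ) ^ n / n.factorial ≤ Real.exp 1 ^ n := by
    rw [← Real.exp_nat_mul, mul_one]
    exact Real.pow_div_factorial_le_exp _ n.cast_nonneg n
  rw [mul_pow, mul_pow, mul_div_assoc]
  gcongr

/-- The number of grid cubes of side ε/d intersecting the ℓ¹-ball of radius δ
is at most (2d(δ+ε)/ε)^d / d! ≤ (2e(δ+ε)/ε)^d. -/
theorem stmt_2
    (d : ℕ) (hd : 1 ≤ d) (δ ε : ℝ) (hδ : 0 < δ) (hε : 0 < ε) :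
    (Nat.card {z : Fin d → ℤ |
        ∃ u : Fin d → ℝ,
          (∀ j, (z j : ℝ) * (ε / d) ≤ u j ∧ u j ≤ ((z j : ℝ) + 1) * (ε / d)) ∧
          ∑ j, |u j| ≤ δ} : ℝ)
      ≤ (2 * d * (δ + ε) / ε) ^ d / (Nat.factorial d)
    ∧ (2 * d * (δ + ε) / ε) ^ d / (Nat.factorial d)
      ≤ (2 * Real.exp 1 * (δ + ε) / ε) ^ d := by
  have hd0 : (0 : ℝ) < d := by exact_mod_cast hd
  have hside : 2 * (δ / (ε / d) + d) = 2 * d * (δ + ε) / ε := by field_simp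
  constructor
  · have := card_l1BallGridCubes_le_pow_div_factorial (ι := Fin d) (div_pos hε hd0) hδ.le
    rwa [Fintype.card_fin, hside] at this
  · have := mul_natCast_pow_div_factorial_le (a := 2 * (δ + ε) / ε) (by positivity) d
    convert this using 3 <;> ring
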